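/- arXiv:2002.10382 — 5 statements merged into one kernel-verified Lean document; each statement's English description precedes it below -/
import Mathlib

section
/- Let ψ ∈ S(ℝ, ℂ) be a Schwartz function, let (Iφ)(x) := (1/x)φ(1/x), and let Π be the differential operator (Πφ)(x) := i·x·(d/dx)[x·φ(x)]. Then for every x ≠ 0 one has (Π(Iψ))(x) = −(i/x)·ψ′(1/x) = (I(−iψ′))(x). That is, Π∘I = I∘(−i d/dx) on the Schwartz space, so the transformed operator ℘ := I Π I acts as the momentum operator −i d/dx on I[S(ℝ)]. -/
/-
For `x ≠ 0` the function `y ↦ y · (Iψ)(y)` coincides near `x` with `y ↦ ψ (1/y)`, so the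
operator `Π` only sees the chain rule for `ψ ∘ (1/·)`, whose inner derivative is `-1/x²`;
the factor `i x` of `Π` turns this into `-(i/x) ψ'(1/x)`.
-/

open MeasureTheory

/-- The inversion operator `(Iψ)(x) = (1/x) ψ(1/x)`. -/
noncomputable def invOp (ψ : ℝ → ℂ) (x : ℝ) : ℂ :=
  (1 / (x : ℂ)) * ψ (1 / x)

lemma ofReal_mul_invOp {ψ : ℝ → ℂ} {y : ℝ} (hy : y ≠ 0) :
    (y : ℂ) * invOp ψ y = ψ (1 / y) := by
  have hyC : (y : ℂ) ≠ 0 := by exact_mod_cast hy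
  rw [invOp, ← mul_assoc, mul_one_div_cancel hyC, one_mul]

lemma ofReal_mul_invOp_eventuallyEq {ψ : ℝ → ℂ} {x : ℝ} (hx : x ≠ 0) :
    (fun y : ℝ => (y : ℂ) * invOp ψ y) =ᶠ[nhds x] fun y => ψ (1 / y) := by
  filter_upwards [isOpen_ne.mem_nhds hx] with y hy
  exact ofReal_mul_invOp hy

lemma hasDerivAt_comp_one_div {E : Type*} [NormedAddCommGroup E] [NormedSpace ℝ E]
    {f : ℝ → E} {x : ℝ} (hx : x ≠ 0) (hf : DifferentiableAt ℝ f (1 / x)) :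
    HasDerivAt (fun y => f (1 / y)) (-(x ^ 2)⁻¹ • deriv f (1 / x)) x := by
  have hinv : HasDerivAt (fun y : ℝ => 1 / y) (-(x ^ 2)⁻¹) x := by
    simpa only [one_div] using hasDerivAt_inv hx
  exact hf.hasDerivAt.scomp x hinv

lemma deriv_ofReal_mul_invOp {ψ : ℝ → ℂ} {x : ℝ} (hx : x ≠ 0)
    (hψ : DifferentiableAt ℝ ψ (1 / x)) :
    deriv (fun y : ℝ => (y : ℂ) * invOp ψ y) x = -((x : ℂ) ^ 2)⁻¹ * deriv ψ (1 / x) := by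
  rw [(ofReal_mul_invOp_eventuallyEq hx).deriv_eq, (hasDerivAt_comp_one_div hx hψ).deriv,
    Complex.real_smul]
  push_cast
  rfl

/-- for a Schwartz function `ψ` and `x ≠ 0`,
`(Π (Iψ))(x) = -(i/x) ψ'(1/x) = (I(-iψ'))(x)`, where `(Πφ)(x) = i x (d/dx)(x φ(x))`. -/
theorem PiOp_comp_invOp (ψ : SchwartzMap ℝ ℂ) (x : ℝ) (hx : x ≠ 0) :
    Complex.I * (x : ℂ) * deriv (fun y : ℝ => (y : ℂ) * invOp (⇑ψ) y) x
        = -(Complex.I / (x : ℂ)) * deriv (fun y : ℝ => ψ y) (1 / x) ∧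
    -(Complex.I / (x : ℂ)) * deriv (fun y : ℝ => ψ y) (1 / x)
        = invOp (fun y : ℝ => -Complex.I * deriv (fun z : ℝ => ψ z) y) x := by
  refine ⟨?_, ?_⟩
  · have hxC : (x : ℂ) ≠ 0 := by exact_mod_cast hx
    rw [deriv_ofReal_mul_invOp hx (ψ.differentiable _)]
    field_simp
  · rw [invOp]
    ring
end

section
/- Fix θ ∈ ℝ. For t ∈ ℝ define the operator V_θ(t) on L²(ℝ, ℂ) by (V_θ(t)ψ)(x) := e^{i(θ/2)(1 − sgn(1 − tx))·sgn(x)} · (1 − tx)^{−1} · ψ( x/(1 − tx) ) (for a.e. x with 1 − tx ≠ 0). Then: (i) each V_θ(t) is an isometry of L²(ℝ): ‖V_θ(t)ψ‖₂ = ‖ψ‖₂ for all ψ ∈ L²(ℝ); (ii) the group law holds: for all t₁, t₂ ∈ ℝ and ψ ∈ L²(ℝ), V_θ(t₁)(V_θ(t₂)ψ) = V_θ(t₁ + t₂)ψ almost everywhere; in particular V_θ(0) = Id and V_θ(t)⁻¹ = V_θ(−t), so (V_θ(t))_{t∈ℝ} is a one-parameter group of unitaries (the unitary propagator e^{−itΠ_θ}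 of the self-adjoint extension Π_θ). -/
/-!
`V_θ(t)` is the composition operator along the flow `x ↦ x / (1 - t x)` of the vector field
`x² d/dx`, weighted by a multiplier of modulus `|1 - t x|⁻¹`, the square root of the Jacobian of
the flow. Isometry is therefore the change of variables formula for this flow, and the group law
is the flow property `φ_{t₂} ∘ φ_{t₁} = φ_{t₁ + t₂}` together with a cocycle identity for the
multiplier; its phase part reduces to `sgn(a)² = 1` for `a = 1 - t₁ x ≠ 0`, which holds a.e.
-/

open MeasureTheory

/-- The unitary propagator `V_θ(t) = e^{-itΠ_θ}` of the self-adjoint extension `Π_θ`: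
`(V_θ(t)ψ)(x) = e^{i(θ/2)(1 - sgn(1-tx)) sgn(x)} (1-tx)⁻¹ ψ(x/(1-tx))`. -/
noncomputable def Vprop (θ t : ℝ) (ψ : ℝ → ℂ) (x : ℝ) : ℂ :=
  Complex.exp (Complex.I * ((θ / 2) * (1 - Real.sign (1 - t * x)) * Real.sign x : ℝ)) *
    (1 / ((1 - t * x : ℝ) : ℂ)) * ψ (x / (1 - t * x))

namespace Real

theorem sign_mul (x y : ℝ) : sign (x * y) = sign x * sign y := by
  rcases lt_trichotomy x 0 with hx | hx | hx <;> rcases lt_trichotomy y 0 with hy | hy | hy <;>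
    simp_all [sign_of_pos, sign_of_neg, mul_pos_of_neg_of_neg, mul_neg_of_pos_of_neg,
      mul_neg_of_neg_of_pos]

theorem sign_div (x y : ℝ) : sign (x / y) = sign x * sign y := by
  rw [div_eq_mul_inv, sign_mul, sign_inv]

theorem sign_mul_self_of_ne_zero {x : ℝ} (hx : x ≠ 0) : sign x * sign x = 1 := by
  rcases sign_apply_eq_of_ne_zero x hx with h | h <;> simp [h]

end Real

theorem sign_phase_cocycle {a : ℝ} (ha : a ≠ 0) (b x : ℝ) :
    (1 - Real.sign a) * Real.sign x + (1 - Real.sign (b / a)) * Real.sign (x / a) =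
      (1 - Real.sign b) * Real.sign x := by
  rw [Real.sign_div, Real.sign_div]
  linear_combination (-Real.sign b * Real.sign x) * Real.sign_mul_self_of_ne_zero ha

noncomputable def mobiusShift (t x : ℝ) : ℝ := x / (1 - t * x)

theorem mobiusShift_zero (x : ℝ) : mobiusShift 0 x = x := by
  simp [mobiusShift]

theorem one_sub_mul_mobiusShift {t₁ x : ℝ} (h : 1 - t₁ * x ≠ 0) (t₂ : ℝ) :
    1 - t₂ * mobiusShift t₁ x = (1 - (t₁ + t₂) * x) / (1 - t₁ * x) := by
  rw [mobiusShift, eq_div_iff h, sub_mul, mul_assoc, div_mul_cancel₀ _ h]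
  ring

theorem mobiusShift_mobiusShift {t₁ x : ℝ} (h : 1 - t₁ * x ≠ 0) (t₂ : ℝ) :
    mobiusShift t₂ (mobiusShift t₁ x) = mobiusShift (t₁ + t₂) x := by
  rw [mobiusShift.eq_1 t₂, one_sub_mul_mobiusShift h, mobiusShift, mobiusShift,
    div_div_div_cancel_right₀ h]

theorem hasDerivAt_mobiusShift {t x : ℝ} (h : 1 - t * x ≠ 0) :
    HasDerivAt (mobiusShift t) ((1 - t * x) ^ 2)⁻¹ x := by
  refine ((hasDerivAt_id' x).div (((hasDerivAt_id' x).const_mul t).const_sub 1) h).congr_deriv ?_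
  ring

theorem ae_one_sub_mul_ne_zero (t : ℝ) : ∀ᵐ x : ℝ, 1 - t * x ≠ 0 := by
  filter_upwards [Measure.ae_ne volume t⁻¹] with x hx
  contrapose! hx
  exact eq_inv_of_mul_eq_one_right (by linarith)

theorem integral_comp_mobiusShift {E : Type*} [NormedAddCommGroup E] [NormedSpace ℝ E]
    (t : ℝ) (g : ℝ → E) : ∫ x, ((1 - t * x) ^ 2)⁻¹ • g (mobiusShift t x) = ∫ y, g y := by
  set s : Set ℝ := {x | 1 - t * x ≠ 0}
  have hs : MeasurableSet s :=
    (measurableSet_singleton 0).compl.preimage (by fun_prop : Measurable fun x : ℝ => 1 - t * x)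
  have hinj : Set.InjOn (mobiusShift t) s := fun x hx y hy hxy => by
    rw [← mobiusShift_zero x, ← mobiusShift_zero y, ← add_neg_cancel t,
      ← mobiusShift_mobiusShift hx, ← mobiusShift_mobiusShift hy, hxy]
  have himage : ∀ᵐ y : ℝ, y ∈ mobiusShift t '' s := by
    filter_upwards [ae_one_sub_mul_ne_zero (-t)] with y hy
    refine ⟨mobiusShift (-t) y, ?_, ?_⟩
    · change 1 - t * mobiusShift (-t) y ≠ 0
      rw [one_sub_mul_mobiusShift hy, neg_add_cancel, zero_mul, sub_zero]
      exact one_div_ne_zero hy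
    · rw [mobiusShift_mobiusShift hy, neg_add_cancel, mobiusShift_zero]
  calc ∫ x, ((1 - t * x) ^ 2)⁻¹ • g (mobiusShift t x)
      = ∫ x in s, |((1 - t * x) ^ 2)⁻¹| • g (mobiusShift t x) := by
        rw [Measure.restrict_eq_self_of_ae_mem (s := s) (ae_one_sub_mul_ne_zero t)]
        simp only [abs_inv, abs_pow, sq_abs]
    _ = ∫ y in mobiusShift t '' s, g y :=
        (integral_image_eq_integral_abs_deriv_smul hs
          (fun x hx => (hasDerivAt_mobiusShift hx).hasDerivWithinAt) hinj g).symm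
    _ = ∫ y, g y := by rw [Measure.restrict_eq_self_of_ae_mem himage]

noncomputable def Vmultiplier (θ a x : ℝ) : ℂ :=
  Complex.exp (Complex.I * ((θ / 2) * (1 - Real.sign a) * Real.sign x : ℝ)) * (1 / (a : ℂ))

theorem Vprop_apply (θ t : ℝ) (ψ : ℝ → ℂ) (x : ℝ) :
    Vprop θ t ψ x = Vmultiplier θ (1 - t * x) x * ψ (mobiusShift t x) :=
  rfl

theorem norm_Vmultiplier (θ a x : ℝ) : ‖Vmultiplier θ a x‖ = |a|⁻¹ := by
  rw [Vmultiplier, norm_mul, mul_comm Complex.I, Complex.norm_exp_ofReal_mul_I, one_mul,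
    norm_div, norm_one, Complex.norm_real, Real.norm_eq_abs, one_div]

/-- With `a = 1 - t₁ x` and `b = 1 - (t₁ + t₂) x`, the second factor is the multiplier of
`Vprop θ t₂` at `mobiusShift t₁ x = x / a`, since there `1 - t₂ (x / a) = b / a`. -/
theorem Vmultiplier_mul_Vmultiplier {a : ℝ} (ha : a ≠ 0) (θ b x : ℝ) :
    Vmultiplier θ a x * Vmultiplier θ (b / a) (x / a) = Vmultiplier θ b x := by
  have hphase : (θ / 2) * (1 - Real.sign a) * Real.sign x +
      (θ / 2) * (1 - Real.sign (b / a)) * Real.sign (x / a) =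
      (θ / 2) * (1 - Real.sign b) * Real.sign x := by
    linear_combination (θ / 2) * sign_phase_cocycle ha b x
  have ha' : (a : ℂ) ≠ 0 := Complex.ofReal_ne_zero.2 ha
  rw [Vmultiplier, Vmultiplier, Vmultiplier, ← hphase, Complex.ofReal_add, mul_add,
    Complex.exp_add, Complex.ofReal_div]
  field_simp

theorem Vprop_zero (θ : ℝ) (ψ : ℝ → ℂ) (x : ℝ) : Vprop θ 0 ψ x = ψ x := by
  simp [Vprop, Real.sign_one]

theorem Vprop_Vprop_apply {t₁ x : ℝ} (h : 1 - t₁ * x ≠ 0) (θ t₂ : ℝ) (ψ : ℝ → ℂ) :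
    Vprop θ t₁ (Vprop θ t₂ ψ) x = Vprop θ (t₁ + t₂) ψ x := by
  rw [Vprop_apply, Vprop_apply, Vprop_apply, mobiusShift_mobiusShift h,
    one_sub_mul_mobiusShift h, ← mul_assoc, mobiusShift, Vmultiplier_mul_Vmultiplier h]

theorem Vprop_Vprop_ae_eq (θ t₁ t₂ : ℝ) (ψ : ℝ → ℂ) :
    (fun x => Vprop θ t₁ (Vprop θ t₂ ψ) x) =ᵐ[volume] Vprop θ (t₁ + t₂) ψ := by
  filter_upwards [ae_one_sub_mul_ne_zero t₁] with x hx
  exact Vprop_Vprop_apply hx θ t₂ ψ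

theorem integral_norm_Vprop_sq (θ t : ℝ) (ψ : ℝ → ℂ) :
    ∫ x, ‖Vprop θ t ψ x‖ ^ 2 = ∫ x, ‖ψ x‖ ^ 2 := by
  simp_rw [Vprop_apply, norm_mul, norm_Vmultiplier, mul_pow, inv_pow, sq_abs]
  exact integral_comp_mobiusShift t fun y => ‖ψ y‖ ^ 2

/-- `(V_θ(t))_{t ∈ ℝ}` is a one-parameter group of unitaries: each `V_θ(t)`
is an isometry of `L²(ℝ)`, the group law holds a.e., `V_θ(0) = Id`, and
`V_θ(t)⁻¹ = V_θ(-t)`. -/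
theorem Vprop_unitary_group (θ : ℝ) :
    (∀ t : ℝ, ∀ ψ : ℝ → ℂ, MemLp ψ 2 (volume : Measure ℝ) →
      (∫ x : ℝ, ‖Vprop θ t ψ x‖ ^ 2) = ∫ x : ℝ, ‖ψ x‖ ^ 2) ∧
    (∀ t₁ t₂ : ℝ, ∀ ψ : ℝ → ℂ,
      (fun x => Vprop θ t₁ (Vprop θ t₂ ψ) x) =ᵐ[(volume : Measure ℝ)]
        Vprop θ (t₁ + t₂) ψ) ∧
    (∀ ψ : ℝ → ℂ, ∀ x : ℝ, Vprop θ 0 ψ x = ψ x) ∧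
    (∀ t : ℝ, ∀ ψ : ℝ → ℂ,
      (fun x => Vprop θ t (Vprop θ (-t) ψ) x) =ᵐ[(volume : Measure ℝ)] ψ) := by
  refine ⟨fun t ψ _ => integral_norm_Vprop_sq θ t ψ, Vprop_Vprop_ae_eq θ, Vprop_zero θ,
    fun t ψ => ?_⟩
  simpa only [add_neg_cancel, funext (Vprop_zero θ ψ)] using Vprop_Vprop_ae_eq θ t (-t) ψ
end

section
/- Let m > 0, λ > 0, ℓ := 1/λ, and fix initial data ϱ, ℘ ∈ ℝ with ℘ ≠ 0. Define p(t) := ℓ℘/( (℘/(2m))·t + ℓ ) and x(t) := ((ℓ + ϱ)/ℓ²)·( (℘/(2m))·t + ℓ )² − ℓ. Then on any interval J containing 0 on which (℘/(2m))·t + ℓ ≠ 0 (i.e., avoiding the critical time t_c = −2mℓ/℘), the pair (x, p) solves the one-dimensional thermal Hamilton system ẋ(t) = (1 + λ·x(t))·p(t)/m, ṗ(t) = −λ·p(t)²/(2m), with initial conditions x(0) = ϱ and p(0) = ℘. Moreover x(t_c) = −ℓ (the solution touches the critical point exactly at the critical time). -/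
/-!
The momentum equation `ṗ = -λp²/(2m)` is a Riccati equation, solved by `p = ℓ℘/u` with
`u(t) = (℘/(2m))t + ℓ` affine. Conservation of the energy `(1 + λx)p²/(2m)` then forces
`1 + λx` to be proportional to `u²`, which gives the stated `x`; the solution reaches the
critical point `x = -ℓ` exactly where `u` vanishes, at `t_c`.
-/

theorem hasDerivAt_affine (a b t : ℝ) : HasDerivAt (fun s => a * s + b) a t := by
  simpa using ((hasDerivAt_id t).const_mul a).add_const b

theorem hasDerivAt_const_div_affine {a b c t : ℝ} (ht : a * t + b ≠ 0) :
    HasDerivAt (fun s => c / (a * s + b)) (-(a / c) * (c / (a * t + b)) ^ 2) t := by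
  refine ((hasDerivAt_const t c).div (hasDerivAt_affine a b t) ht).congr_deriv ?_
  rcases eq_or_ne c 0 with rfl | hc
  · simp
  · field_simp
    ring

theorem hasDerivAt_mul_affine_sq_sub {a b k t : ℝ} :
    HasDerivAt (fun s => k * (a * s + b) ^ 2 - b) (2 * k * a * (a * t + b)) t :=
  ((((hasDerivAt_affine a b t).pow 2).const_mul k).sub_const b).congr_deriv (by ring)

section Thermal

variable {m lam ℓ ϱ ℘ t : ℝ}

theorem thermal_momentum_hasDerivAt (hℓ : lam * ℓ = 1) (h℘ : ℘ ≠ 0)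
    (ht : ℘ / (2 * m) * t + ℓ ≠ 0) :
    HasDerivAt (fun s => ℓ * ℘ / (℘ / (2 * m) * s + ℓ))
      (-lam * (ℓ * ℘ / (℘ / (2 * m) * t + ℓ)) ^ 2 / (2 * m)) t := by
  have hℓ0 : ℓ ≠ 0 := right_ne_zero_of_mul_eq_one hℓ
  refine (hasDerivAt_const_div_affine ht).congr_deriv ?_
  obtain rfl : lam = ℓ⁻¹ := eq_inv_of_mul_eq_one_left hℓ
  field_simp

theorem thermal_position_hasDerivAt (hℓ : lam * ℓ = 1) (ht : ℘ / (2 * m) * t + ℓ ≠ 0) :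
    HasDerivAt (fun s => (ℓ + ϱ) / ℓ ^ 2 * (℘ / (2 * m) * s + ℓ) ^ 2 - ℓ)
      ((1 + lam * ((ℓ + ϱ) / ℓ ^ 2 * (℘ / (2 * m) * t + ℓ) ^ 2 - ℓ))
        * (ℓ * ℘ / (℘ / (2 * m) * t + ℓ)) / m) t := by
  have hℓ0 : ℓ ≠ 0 := right_ne_zero_of_mul_eq_one hℓ
  refine hasDerivAt_mul_affine_sq_sub.congr_deriv ?_
  generalize ℘ / (2 * m) * t + ℓ = u at ht ⊢
  have hvel : (1 + lam * ((ℓ + ϱ) / ℓ ^ 2 * u ^ 2 - ℓ)) * (ℓ * ℘ / u) =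
      (ℓ + ϱ) / ℓ ^ 2 * u * ℘ := by
    obtain rfl : lam = ℓ⁻¹ := eq_inv_of_mul_eq_one_left hℓ
    field_simp
    ring
  rw [hvel]
  ring

end Thermal

theorem thermal_1D_solution_general (m lam ℓ : ℝ) (hm : 0 < m) (hlam : 0 < lam)
    (hℓ : ℓ = 1 / lam) (ϱ ℘ : ℝ) (h℘ : ℘ ≠ 0)
    (p x : ℝ → ℝ)
    (hp : p = fun t => ℓ * ℘ / ((℘ / (2 * m)) * t + ℓ))
    (hx : x = fun t => ((ℓ + ϱ) / ℓ ^ 2) * ((℘ / (2 * m)) * t + ℓ) ^ 2 - ℓ)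
    (J : Set ℝ)
    (hJ : ∀ t ∈ J, (℘ / (2 * m)) * t + ℓ ≠ 0) :
    (∀ t ∈ J, HasDerivAt x ((1 + lam * x t) * p t / m) t) ∧
    (∀ t ∈ J, HasDerivAt p (-lam * (p t) ^ 2 / (2 * m)) t) ∧
    x 0 = ϱ ∧ p 0 = ℘ ∧ x (-(2 * m * ℓ) / ℘) = -ℓ := by
  have hlamℓ : lam * ℓ = 1 := by rw [hℓ]; field_simp
  have hℓ0 : ℓ ≠ 0 := right_ne_zero_of_mul_eq_one hlamℓ
  have hu_crit : ℘ / (2 * m) * (-(2 * m * ℓ) / ℘) + ℓ = 0 := by field_simp; ring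
  subst hp hx
  refine ⟨fun t ht => thermal_position_hasDerivAt hlamℓ (hJ t ht),
    fun t ht => thermal_momentum_hasDerivAt hlamℓ h℘ (hJ t ht), ?_, ?_, ?_⟩
  · simp only [mul_zero, zero_add]
    field_simp
    ring
  · simp only [mul_zero, zero_add]
    field_simp
  · simp only [hu_crit]
    ring

/-- explicit solution of the one-dimensional thermal Hamilton system
`ẋ = (1+λx)p/m`, `ṗ = -λp²/(2m)` with initial data `x(0) = ϱ`, `p(0) = ℘ ≠ 0`:
`p(t) = ℓ℘/((℘/(2m))t + ℓ)` and `x(t) = ((ℓ+ϱ)/ℓ²)((℘/(2m))t + ℓ)² - ℓ` (where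
`ℓ = 1/λ`), valid away from the critical time `t_c = -2mℓ/℘`, and `x(t_c) = -ℓ`. -/
theorem thermal_1D_solution (m lam ℓ : ℝ) (hm : 0 < m) (hlam : 0 < lam)
    (hℓ : ℓ = 1 / lam) (ϱ ℘ : ℝ) (h℘ : ℘ ≠ 0)
    (p x : ℝ → ℝ)
    (hp : p = fun t => ℓ * ℘ / ((℘ / (2 * m)) * t + ℓ))
    (hx : x = fun t => ((ℓ + ϱ) / ℓ ^ 2) * ((℘ / (2 * m)) * t + ℓ) ^ 2 - ℓ)
    (J : Set ℝ) (h0J : (0 : ℝ) ∈ J)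
    (hJ : ∀ t ∈ J, (℘ / (2 * m)) * t + ℓ ≠ 0) :
    (∀ t ∈ J, HasDerivAt x ((1 + lam * x t) * p t / m) t) ∧
    (∀ t ∈ J, HasDerivAt p (-lam * (p t) ^ 2 / (2 * m)) t) ∧
    x 0 = ϱ ∧ p 0 = ℘ ∧ x (-(2 * m * ℓ) / ℘) = -ℓ :=
  thermal_1D_solution_general m lam ℓ hm hlam hℓ ϱ ℘ h℘ p x hp hx J hJ
end

section
/- Let d ≥ 2, m > 0, λ > 0, ℓ := 1/λ, and fix initial data ϱ₀, ϱ₁, …, ϱ_{d−1} ∈ ℝ, ℘₀ ∈ ℝ and ℘₁, …, ℘_{d−1} ∈ ℝ with ℘⊥ := (∑_{j=1}^{d−1} ℘_j²)^{1/2} > 0. Set φ := arctan(℘₀/℘⊥), A := (ℓ + ϱ₀)/cos²(φ), and θ(t) := φ − (λ℘⊥/(2m))·t. Define p₀(t) := ℘⊥·tan(θ(t)), p_j(t) := ℘_j for j = 1,…,d−1, x₀(t) := ϱ₀ + A·(cos²(θ(t)) − cos²(φ)), and x_j(t) := ϱ_j + (λ℘_j A/(2m))·t − (A/2)·(℘_j/℘⊥)·(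 sin(2θ(t)) − sin(2φ) ). Then on any interval J containing 0 on which cos(θ(t)) ≠ 0, these functions solve the thermal Hamilton system ẋ_j(t) = (1 + λ x₀(t))·p_j(t)/m for j = 0,…,d−1 and ṗ₀(t) = −λ·(p₀(t)² + ℘⊥²)/(2m), ṗ_j(t) = 0 for j = 1,…,d−1, with initial conditions x_j(0) = ϱ_j and p_j(0) = ℘_j (in particular p₀(0) = ℘₀ since tan(φ) = ℘₀/℘⊥). -/
/-!
With `θ(t) = φ - ω t` and `ω = λ℘⊥/(2m)`, the choice `A = (ℓ + ϱ₀)/cos²φ` is exactly what turns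
the thermal factor into `1 + λ x₀(t) = λ A cos² θ(t)`. After that every equation is a one-line
trigonometric identity: `p₀ = ℘⊥ tan θ` solves the Riccati equation because `tan' = 1 + tan²`,
and both `ẋ₀ = 2Aω sin θ cos θ` and `ẋ_j = (λ A ℘_j / 2m)(1 + cos 2θ)` equal `λ A cos² θ · p_j / m`.
-/

open Real

theorem HasDerivAt.tan {f : ℝ → ℝ} {f' x : ℝ} (hf : HasDerivAt f f' x)
    (hc : Real.cos (f x) ≠ 0) :
    HasDerivAt (fun y => Real.tan (f y)) ((1 + Real.tan (f x) ^ 2) * f') x := by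
  refine ((hasDerivAt_tan hc).comp x hf).congr_deriv ?_
  rw [one_div, ← inv_one_add_tan_sq hc, inv_inv]

theorem hasDerivAt_const_sub_mul (φ ω t : ℝ) : HasDerivAt (fun s => φ - ω * s) (-ω) t := by
  simpa using ((hasDerivAt_id t).const_mul ω).const_sub φ

namespace ThermalFlow

variable {m lam perp φ A : ℝ}

theorem one_add_mul_position_zero_eq (hlam : lam ≠ 0) (hcφ : cos φ ≠ 0) (ϱ₀ c : ℝ)
    (hA : A = (1 / lam + ϱ₀) / cos φ ^ 2) :
    1 + lam * (ϱ₀ + A * (c - cos φ ^ 2)) = lam * A * c := by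
  subst hA
  field_simp
  ring

theorem hasDerivAt_momentum (hperp : perp ≠ 0) {t : ℝ}
    (hc : cos (φ - lam * perp / (2 * m) * t) ≠ 0) :
    HasDerivAt (fun s => perp * tan (φ - lam * perp / (2 * m) * s))
      (-lam * ((perp * tan (φ - lam * perp / (2 * m) * t)) ^ 2 + perp ^ 2) / (2 * m)) t := by
  refine (((hasDerivAt_const_sub_mul _ _ t).tan hc).const_mul perp).congr_deriv ?_
  field_simp
  ring

theorem hasDerivAt_position_zero (hm : m ≠ 0) (ϱ₀ t : ℝ) :
    HasDerivAt (fun s => ϱ₀ + A * (cos (φ - lam * perp / (2 * m) * s) ^ 2 - cos φ ^ 2))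
      (lam * A * cos (φ - lam * perp / (2 * m) * t) ^ 2
        * (perp * tan (φ - lam * perp / (2 * m) * t)) / m) t := by
  refine (((((hasDerivAt_const_sub_mul φ _ t).cos.fun_pow 2).sub_const _).const_mul A).const_add
    ϱ₀).congr_deriv ?_
  rw [tan_eq_sin_div_cos]
  field_simp
  ring

theorem hasDerivAt_position_perp (hm : m ≠ 0) (hperp : perp ≠ 0) (ϱ_j ℘_j t : ℝ) :
    HasDerivAt (fun s => ϱ_j + lam * ℘_j * A / (2 * m) * s
        - A / 2 * (℘_j / perp) * (sin (2 * (φ - lam * perp / (2 * m) * s)) - sin (2 * φ)))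
      (lam * A * cos (φ - lam * perp / (2 * m) * t) ^ 2 * ℘_j / m) t := by
  have hlin : HasDerivAt (fun s => ϱ_j + lam * ℘_j * A / (2 * m) * s)
      (lam * ℘_j * A / (2 * m)) t := by
    simpa using ((hasDerivAt_id t).const_mul (lam * ℘_j * A / (2 * m))).const_add ϱ_j
  refine (hlin.sub ((((hasDerivAt_const_sub_mul φ _ t).const_mul 2).sin.sub_const _).const_mul
    (A / 2 * (℘_j / perp)))).congr_deriv ?_
  rw [cos_two_mul]
  field_simp
  ring

end ThermalFlow

open ThermalFlow in
theorem thermal_general_solution_general (d : ℕ) (m lam ℓ : ℝ) (hm : 0 < m) (hlam : 0 < lam)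
    (hℓ : ℓ = 1 / lam)
    (ϱ ℘ : Fin (d + 2) → ℝ) (perp φ A : ℝ) (θ : ℝ → ℝ)
    (hperp_pos : 0 < perp)
    (hφ : φ = Real.arctan (℘ 0 / perp))
    (hA : A = (ℓ + ϱ 0) / (Real.cos φ) ^ 2)
    (hθ : θ = fun t => φ - (lam * perp / (2 * m)) * t)
    (p x : ℝ → Fin (d + 2) → ℝ)
    (hp : p = fun t j => if j = 0 then perp * Real.tan (θ t) else ℘ j)
    (hx : x = fun t j => if j = 0 then ϱ 0 + A * ((Real.cos (θ t)) ^ 2 - (Real.cos φ) ^ 2)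
      else ϱ j + (lam * ℘ j * A / (2 * m)) * t
        - (A / 2) * (℘ j / perp) * (Real.sin (2 * θ t) - Real.sin (2 * φ)))
    (J : Set ℝ) (hJ : ∀ t ∈ J, Real.cos (θ t) ≠ 0) :
    (∀ t ∈ J, ∀ j : Fin (d + 2),
      HasDerivAt (fun s => x s j) ((1 + lam * x t 0) * p t j / m) t) ∧
    (∀ t ∈ J,
      HasDerivAt (fun s => p s 0) (-lam * ((p t 0) ^ 2 + perp ^ 2) / (2 * m)) t) ∧
    (∀ t ∈ J, ∀ j : Fin (d + 2), j ≠ 0 → HasDerivAt (fun s => p s j) 0 t) ∧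
    (∀ j : Fin (d + 2), x 0 j = ϱ j) ∧ (∀ j : Fin (d + 2), p 0 j = ℘ j) := by
  have hcφ : cos φ ≠ 0 := hφ ▸ (cos_arctan_pos _).ne'
  subst hℓ hθ hp hx
  have hfactor (t : ℝ) := one_add_mul_position_zero_eq hlam.ne' hcφ (ϱ 0)
    (cos (φ - lam * perp / (2 * m) * t) ^ 2) hA
  refine ⟨fun t _ j => ?_, fun t ht => ?_, fun t _ j hj => ?_, fun j => ?_, fun j => ?_⟩
  · by_cases hj : j = 0
    · subst hj
      simpa [hfactor] using hasDerivAt_position_zero (A := A) hm.ne' (ϱ 0) t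
    · simpa [hj, hfactor] using
        hasDerivAt_position_perp (A := A) hm.ne' hperp_pos.ne' (ϱ j) (℘ j) t
  · simpa using hasDerivAt_momentum hperp_pos.ne' (hJ t ht)
  · simpa [hj] using hasDerivAt_const t (℘ j)
  · by_cases hj : j = 0 <;> simp [hj]
  · by_cases hj : j = 0
    · subst hj
      simp [hφ, tan_arctan, mul_div_cancel₀ _ hperp_pos.ne']
    · simp [hj]

/-- the explicit general solution of the classical thermal Hamilton system
in adapted coordinates (direction of the thermal gradient = 0-th axis), in dimension
`d ≥ 2`, with nonvanishing orthogonal momentum `℘⊥ > 0`: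
`p₀(t) = ℘⊥ tan(θ(t))`, `p_j(t) = ℘_j`, `x₀(t) = ϱ₀ + A(cos²θ(t) - cos²φ)`,
`x_j(t) = ϱ_j + (λ℘_jA/(2m))t - (A/2)(℘_j/℘⊥)(sin 2θ(t) - sin 2φ)`, where
`φ = arctan(℘₀/℘⊥)`, `A = (ℓ+ϱ₀)/cos²φ`, `θ(t) = φ - (λ℘⊥/(2m))t`, solves
`ẋ_j = (1+λx₀)p_j/m`, `ṗ₀ = -λ(p₀² + ℘⊥²)/(2m)`, `ṗ_j = 0 (j ≠ 0)` with the given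
initial conditions, on any interval avoiding the zeros of `cos θ`. -/
theorem thermal_general_solution (d : ℕ) (m lam ℓ : ℝ) (hm : 0 < m) (hlam : 0 < lam)
    (hℓ : ℓ = 1 / lam)
    (ϱ ℘ : Fin (d + 2) → ℝ) (perp φ A : ℝ) (θ : ℝ → ℝ)
    (hperp : perp = Real.sqrt (∑ j ∈ Finset.univ.erase (0 : Fin (d + 2)), (℘ j) ^ 2))
    (hperp_pos : 0 < perp)
    (hφ : φ = Real.arctan (℘ 0 / perp))
    (hA : A = (ℓ + ϱ 0) / (Real.cos φ) ^ 2)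
    (hθ : θ = fun t => φ - (lam * perp / (2 * m)) * t)
    (p x : ℝ → Fin (d + 2) → ℝ)
    (hp : p = fun t j => if j = 0 then perp * Real.tan (θ t) else ℘ j)
    (hx : x = fun t j => if j = 0 then ϱ 0 + A * ((Real.cos (θ t)) ^ 2 - (Real.cos φ) ^ 2)
      else ϱ j + (lam * ℘ j * A / (2 * m)) * t
        - (A / 2) * (℘ j / perp) * (Real.sin (2 * θ t) - Real.sin (2 * φ)))
    (J : Set ℝ) (h0J : (0 : ℝ) ∈ J) (hJ : ∀ t ∈ J, Real.cos (θ t) ≠ 0) :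
    (∀ t ∈ J, ∀ j : Fin (d + 2),
      HasDerivAt (fun s => x s j) ((1 + lam * x t 0) * p t j / m) t) ∧
    (∀ t ∈ J,
      HasDerivAt (fun s => p s 0) (-lam * ((p t 0) ^ 2 + perp ^ 2) / (2 * m)) t) ∧
    (∀ t ∈ J, ∀ j : Fin (d + 2), j ≠ 0 → HasDerivAt (fun s => p s j) 0 t) ∧
    (∀ j : Fin (d + 2), x 0 j = ϱ j) ∧ (∀ j : Fin (d + 2), p 0 j = ℘ j) :=
  thermal_general_solution_general d m lam ℓ hm hlam hℓ ϱ ℘ perp φ A θ hperp_pos hφ hA hθ p x hp hx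
    J hJ
end

section
/- Let λ > 0, ℓ := 1/λ, m > 0, and let ϱ₀ ∈ ℝ with ℓ + ϱ₀ > 0 and ℘₀ ∈ ℝ, ℘⊥ > 0. Set φ := arctan(℘₀/℘⊥), A := (ℓ + ϱ₀)/cos²(φ), θ(t) := φ − (λ℘⊥/(2m))·t, and x₀(t) := ϱ₀ + A·(cos²(θ(t)) − cos²(φ)). Then for every t ∈ ℝ: −ℓ ≤ x₀(t) ≤ ϱ₀ + (℘₀/℘⊥)²·(ℓ + ϱ₀), and x₀(t) = −ℓ if and only if cos(θ(t)) = 0. That is, whenever the initial momentum has a nonzero component orthogonal to the thermal gradient, the motion along the gradient direction is bounded, confined between the critical plane {x₀ = −ℓ} and the extremal plane {x₀ = ϱ₀ + (℘₀/℘⊥)²(ℓ + ϱ₀)}. -/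
/-! Since `cos² φ = 1 / (1 + (℘₀/℘⊥)²)`, the amplitude is `A = (ℓ + ϱ₀)(1 + (℘₀/℘⊥)²) > 0` and
`A cos² φ = ℓ + ϱ₀`, so `x₀(t) = -ℓ + A cos² θ(t)`. As `cos² θ(t)` ranges over `[0, 1]`, `x₀`
stays between `-ℓ` and `-ℓ + A = ϱ₀ + (℘₀/℘⊥)²(ℓ + ϱ₀)`, and reaches `-ℓ` exactly where
`cos θ(t)` vanishes. -/

open Real

lemma Real.div_cos_sq_arctan (a x : ℝ) : a / cos (arctan x) ^ 2 = a * (1 + x ^ 2) := by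
  rw [cos_sq_arctan, div_div_eq_mul_div, div_one]

lemma add_div_mul_sub_eq_neg_add_div_mul {ℓ ϱ b : ℝ} (hb : b ≠ 0) (s : ℝ) :
    ϱ + (ℓ + ϱ) / b * (s - b) = -ℓ + (ℓ + ϱ) / b * s := by
  field_simp
  ring

section

variable {ℓ A : ℝ} (c : ℝ)

lemma neg_add_mul_cos_sq_mem_Icc (hA : 0 ≤ A) : -ℓ + A * cos c ^ 2 ∈ Set.Icc (-ℓ) (-ℓ + A) := by
  have hc₀ : 0 ≤ A * cos c ^ 2 := by positivity
  have hc₁ : A * cos c ^ 2 ≤ A := mul_le_of_le_one_right hA (cos_sq_le_one c)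
  constructor <;> linarith

lemma neg_add_mul_cos_sq_eq_neg_iff (hA : A ≠ 0) : -ℓ + A * cos c ^ 2 = -ℓ ↔ cos c = 0 := by
  simp [hA]

end

theorem thermal_motion_bounded_general (ℓ ϱ0 ℘0 perp φ A : ℝ) (θ x0 : ℝ → ℝ)
    (hϱ : 0 < ℓ + ϱ0)
    (hφ : φ = Real.arctan (℘0 / perp))
    (hA : A = (ℓ + ϱ0) / (Real.cos φ) ^ 2)
    (hx0 : x0 = fun t => ϱ0 + A * ((Real.cos (θ t)) ^ 2 - (Real.cos φ) ^ 2)) :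
    ∀ t : ℝ,
      (-ℓ ≤ x0 t ∧ x0 t ≤ ϱ0 + (℘0 / perp) ^ 2 * (ℓ + ϱ0)) ∧
      (x0 t = -ℓ ↔ Real.cos (θ t) = 0) := by
  intro t
  have hcos : cos φ ^ 2 ≠ 0 := by rw [hφ]; exact (pow_pos (cos_arctan_pos _) 2).ne'
  have hx : x0 t = -ℓ + A * cos (θ t) ^ 2 := by
    rw [hx0, hA]
    exact add_div_mul_sub_eq_neg_add_div_mul hcos _
  have hA' : A = (ℓ + ϱ0) * (1 + (℘0 / perp) ^ 2) := by rw [hA, hφ, div_cos_sq_arctan]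
  have hApos : 0 < A := by rw [hA']; positivity
  have htop : -ℓ + A = ϱ0 + (℘0 / perp) ^ 2 * (ℓ + ϱ0) := by rw [hA']; ring
  rw [hx, ← htop]
  exact ⟨neg_add_mul_cos_sq_mem_Icc _ hApos.le, neg_add_mul_cos_sq_eq_neg_iff _ hApos.ne'⟩

/-- when the initial momentum has a nonzero component `℘⊥ > 0` orthogonal
to the thermal gradient, the motion along the gradient direction,
`x₀(t) = ϱ₀ + A(cos²θ(t) - cos²φ)` with `φ = arctan(℘₀/℘⊥)`, `A = (ℓ+ϱ₀)/cos²φ`,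
`θ(t) = φ - (λ℘⊥/(2m))t`, is confined between the critical plane `{x₀ = -ℓ}` and the
extremal plane `{x₀ = ϱ₀ + (℘₀/℘⊥)²(ℓ+ϱ₀)}`, touching the critical plane exactly when
`cos θ(t) = 0`. -/
theorem thermal_motion_bounded (lam ℓ m ϱ0 ℘0 perp φ A : ℝ) (θ x0 : ℝ → ℝ)
    (hlam : 0 < lam) (hℓ : ℓ = 1 / lam) (hm : 0 < m)
    (hϱ : 0 < ℓ + ϱ0) (hperp : 0 < perp)
    (hφ : φ = Real.arctan (℘0 / perp))
    (hA : A = (ℓ + ϱ0) / (Real.cos φ) ^ 2)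
    (hθ : θ = fun t => φ - (lam * perp / (2 * m)) * t)
    (hx0 : x0 = fun t => ϱ0 + A * ((Real.cos (θ t)) ^ 2 - (Real.cos φ) ^ 2)) :
    ∀ t : ℝ,
      (-ℓ ≤ x0 t ∧ x0 t ≤ ϱ0 + (℘0 / perp) ^ 2 * (ℓ + ϱ0)) ∧
      (x0 t = -ℓ ↔ Real.cos (θ t) = 0) :=
  thermal_motion_bounded_general ℓ ϱ0 ℘0 perp φ A θ x0 hϱ hφ hA hx0
end
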